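/- Let ε ≥ 0, θ* ∈ ℝ^d with θ* ≠ 0, Δ ∈ ℝ^d, x ∈ ℝ^d and y ∈ ℝ with xᵀθ* ≠ y. Define l_ε(θ) := (xᵀθ−y)² + 2ε‖θ‖₂|xᵀθ−y| + ε²‖θ‖₂² and g := 2x(xᵀθ*−y) + 2ε[(θ*/‖θ*‖₂)|xᵀθ*−y| + ‖θ*‖₂·x·sgn(xᵀθ*−y)] + 2ε²θ*. Then l_ε(θ*+Δ) − l_ε(θ*) ≥ Δᵀg + (Δᵀx)² + ε²‖Δ‖₂² + 2ε(‖θ*+Δ‖₂ − ‖θ*‖₂)·(Δᵀx)·sgn(xᵀθ*−y). -/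
import Mathlib


open MeasureTheory ProbabilityTheory Real Filter Matrix
open scoped RealInnerProductSpace BigOperators NNReal ENNReal Topology

set_option maxHeartbeats 1200000
noncomputable section

/-- The pointwise `L2`-adversarial squared loss of the linear model at a data point `(x,y)`:
`l_ε(θ) = (xᵀθ−y)² + 2ε‖θ‖₂|xᵀθ−y| + ε²‖θ‖₂² = (|xᵀθ−y| + ε‖θ‖₂)²`. -/
def ladv {d : ℕ} (ε : ℝ) (θ x : EuclideanSpace ℝ (Fin d)) (y : ℝ) : ℝ :=
  (⟪x, θ⟫ - y) ^ 2 + 2 * ε * ‖θ‖ * |⟪x, θ⟫ - y| + ε ^ 2 * ‖θ‖ ^ 2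

/-- Deterministic lower bound on the excess adversarial loss
`l_ε(θ*+Δ) − l_ε(θ*)` in terms of the gradient
`g = 2x(xᵀθ*−y) + 2ε[(θ*/‖θ*‖)|xᵀθ*−y| + ‖θ*‖·x·sgn(xᵀθ*−y)] + 2ε²θ*`,
assuming `θ* ≠ 0` and `xᵀθ* ≠ y`. -/
theorem excess_adversarial_loss_lower_bound
    {d : ℕ} (ε : ℝ) (hε : 0 ≤ ε) (θs Δ x : EuclideanSpace ℝ (Fin d)) (y : ℝ)
    (hθs : θs ≠ 0) (hne : ⟪x, θs⟫ ≠ y) :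
    ladv ε (θs + Δ) x y - ladv ε θs x y ≥
      ⟪Δ, (2 * (⟪x, θs⟫ - y)) • x
            + (2 * ε) • ((|⟪x, θs⟫ - y| / ‖θs‖) • θs
                + (‖θs‖ * Real.sign (⟪x, θs⟫ - y)) • x)
            + (2 * ε ^ 2) • θs⟫
        + ⟪Δ, x⟫ ^ 2 + ε ^ 2 * ‖Δ‖ ^ 2
        + 2 * ε * (‖θs + Δ‖ - ‖θs‖) * ⟪Δ, x⟫ * Real.sign (⟪x, θs⟫ - y) := by

  have haz : (⟪x, θs⟫ - y) ≠ 0 := sub_ne_zero.mpr hne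
  set a := ⟪x, θs⟫ - y with ha
  set b := ⟪x, Δ⟫ with hb
  set t := ⟪θs, Δ⟫ with ht
  set s := Real.sign a with hs
  set n0 := ‖θs‖ with hn0def
  set n1 := ‖θs + Δ‖ with hn1def
  have hn0 : (0:ℝ) < n0 := norm_pos_iff.mpr hθs
  have hn1 : (0:ℝ) ≤ n1 := norm_nonneg _
  have hsa : s * a = |a| := by
    rcases lt_or_gt_of_ne haz with h | h
    · rw [hs, Real.sign_of_neg h, abs_of_neg h]; ring
    · rw [hs, Real.sign_of_pos h, abs_of_pos h]; ring
  have hsabs : |s| ≤ 1 := by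
    rcases lt_or_gt_of_ne haz with h | h
    · rw [hs, Real.sign_of_neg h]; norm_num
    · rw [hs, Real.sign_of_pos h]; norm_num
  have hsb : s * (a + b) ≤ |a + b| := by
    calc s * (a + b) ≤ |s * (a + b)| := le_abs_self _
    _ = |s| * |a + b| := abs_mul _ _
    _ ≤ 1 * |a + b| := by
        have := abs_nonneg (a + b)
        nlinarith
    _ = |a + b| := one_mul _
  have hxsum : ⟪x, θs + Δ⟫ = ⟪x, θs⟫ + b := inner_add_right _ _ _
  have hnormsq : n1 ^ 2 = n0 ^ 2 + 2 * t + ‖Δ‖ ^ 2 := norm_add_sq_real _ _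
  have hcs : ⟪θs + Δ, θs⟫ ≤ n1 * n0 := real_inner_le_norm _ _
  have hinner : ⟪θs + Δ, θs⟫ = n0 ^ 2 + t := by
    rw [inner_add_left, real_inner_self_eq_norm_sq, real_inner_comm]
  have hdiv : (|a| / n0) * t ≤ |a| * (n1 - n0) := by
    have h1 : t ≤ n1 * n0 - n0 ^ 2 := by linarith [hcs, hinner.symm.le, hinner.le]
    have h2 : (|a| / n0) * t ≤ (|a| / n0) * (n1 * n0 - n0 ^ 2) :=
      mul_le_mul_of_nonneg_left h1 (div_nonneg (abs_nonneg a) hn0.le)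
    have h3 : (|a| / n0) * (n1 * n0 - n0 ^ 2) = |a| * (n1 - n0) := by
      field_simp
    linarith
  have hK : n1 * |a + b| - n0 * |a| - (|a| / n0) * t - n1 * (s * b) ≥ 0 := by
    have h1 : n1 * |a + b| - n1 * (s * b) ≥ n1 * |a| := by
      have : |a| + s * b ≤ |a + b| := by
        have : s * (a + b) = |a| + s * b := by rw [mul_add, hsa]
        linarith [hsb]
      nlinarith
    nlinarith [hdiv]
  have hiD : ⟪Δ, θs⟫ = t := real_inner_comm _ _
  have hiDx : ⟪Δ, x⟫ = b := real_inner_comm _ _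
  simp only [ladv, inner_add_right, real_inner_smul_right, hiD, hiDx, hxsum]
  have hab : ⟪x, θs⟫ + b - y = a + b := by rw [ha]; ring
  rw [hab]
  have key : n1 * |a + b| - n0 * |a| ≥ (|a| / n0) * t + n0 * (s * b) + (n1 - n0) * (b * s) := by
    nlinarith [hK]
  have hmul : ε * ((|a| / n0) * t + n0 * (s * b) + (n1 - n0) * (b * s)) ≤
      ε * (n1 * |a + b| - n0 * |a|) := mul_le_mul_of_nonneg_left key hε
  nlinarith [hmul, hnormsq]

end
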